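/- arXiv:1512.06839 — 4 statements merged into one kernel-verified Lean document; each statement's English description precedes it below -/
import Mathlib

section
/- For any word w that is a nonempty product of n matrices from {L, R}, the trace of w is at most φⁿ + 1, where φ = (1+√5)/2 is the golden ratio. -/
open Matrix

def Lmat : Matrix (Fin 2) (Fin 2) ℤ := !![1, 1; 0, 1]
def Rmat : Matrix (Fin 2) (Fin 2) ℤ := !![1, 0; 1, 1]

/-!
`L` and `R` have Euclidean operator norm `φ`, so a word `M` of length `n` has operator norm at
most `t = φ ^ n`. For a `2 × 2` matrix of determinant `1`, the discriminant of the nonnegative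
quadratic form `v ↦ t² ‖v‖² - ‖M v‖²` together with Lagrange's identity gives
`t² ‖M‖_F² ≤ t⁴ + 1`. Writing `M = !![a, b; c, d]`, we have `(a + d)² = ‖M‖_F² + 2 - (b - c)²`,
hence `tr M ≤ t + t⁻¹ ≤ t + 1`.
-/

open Real
open scoped goldenRatio

namespace Matrix

variable {n : Type*} [Fintype n]

/-- `‖M v‖ ≤ |t| ‖v‖` for the Euclidean norm. -/
def NormBoundedBy (M : Matrix n n ℝ) (t : ℝ) : Prop :=
  ∀ v : n → ℝ, M *ᵥ v ⬝ᵥ M *ᵥ v ≤ t ^ 2 * (v ⬝ᵥ v)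

theorem NormBoundedBy.mul {A B : Matrix n n ℝ} {s t : ℝ} (hA : A.NormBoundedBy s)
    (hB : B.NormBoundedBy t) : (A * B).NormBoundedBy (s * t) := fun v => by
  rw [← mulVec_mulVec]
  calc A *ᵥ (B *ᵥ v) ⬝ᵥ A *ᵥ (B *ᵥ v) ≤ s ^ 2 * (B *ᵥ v ⬝ᵥ B *ᵥ v) := hA _
    _ ≤ s ^ 2 * (t ^ 2 * (v ⬝ᵥ v)) := by gcongr; exact hB v
    _ = (s * t) ^ 2 * (v ⬝ᵥ v) := by ring

theorem normBoundedBy_one [DecidableEq n] : (1 : Matrix n n ℝ).NormBoundedBy 1 := fun v => by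
  simp

theorem NormBoundedBy.list_prod [DecidableEq n] {l : List (Matrix n n ℝ)} {t : ℝ}
    (h : ∀ M ∈ l, M.NormBoundedBy t) : l.prod.NormBoundedBy (t ^ l.length) := by
  induction l with
  | nil => simpa using normBoundedBy_one
  | cons M l ih =>
    rw [List.prod_cons, List.length_cons, pow_succ']
    exact (h M List.mem_cons_self).mul (ih fun N hN => h N (List.mem_cons_of_mem M hN))

theorem trace_le_add_inv_of_normBoundedBy {M : Matrix (Fin 2) (Fin 2) ℝ} {t : ℝ}
    (hM : M.NormBoundedBy t) (ht : 0 < t) (hdet : M.det = 1) : M.trace ≤ t + t⁻¹ := by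
  obtain ⟨a, b, c, d, rfl⟩ : ∃ a b c d, M = !![a, b; c, d] := ⟨_, _, _, _, eta_fin_two M⟩
  rw [det_fin_two_of] at hdet
  rw [trace_fin_two_of]
  have hquad : ∀ x : ℝ, 0 ≤ (t ^ 2 - a ^ 2 - c ^ 2) * (x * x) + (-2 * (a * b + c * d)) * x
      + (t ^ 2 - b ^ 2 - d ^ 2) := fun x => by
    have hx := hM ![x, 1]
    simp only [dotProduct, mulVec, Fin.sum_univ_two, of_apply, cons_val', cons_val_zero,
      cons_val_one, empty_val', cons_val_fin_one] at hx
    linarith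
  have hdisc := discrim_le_zero hquad
  rw [discrim] at hdisc
  -- Lagrange's identity: (a² + c²)(b² + d²) - (ab + cd)² = (ad - bc)² = 1
  have hfrob : t ^ 2 * (a ^ 2 + b ^ 2 + c ^ 2 + d ^ 2) ≤ t ^ 4 + 1 := by
    linear_combination hdisc / 4 + (a * d - b * c + 1) * hdet
  have htr : (t * (a + d)) ^ 2 ≤ (t ^ 2 + 1) ^ 2 := by
    linear_combination hfrob + 2 * t ^ 2 * hdet + sq_nonneg (t * (b - c))
  calc a + d ≤ (t ^ 2 + 1) / t := by
        rw [le_div_iff₀ ht]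
        linarith [(abs_le_of_sq_le_sq' htr (by positivity)).2]
    _ = t + t⁻¹ := by field_simp

theorem det_list_prod_eq_one {R : Type*} [DecidableEq n] [CommRing R]
    {l : List (Matrix n n R)} (h : ∀ M ∈ l, M.det = 1) : l.prod.det = 1 :=
  List.prod_induction (fun M : Matrix n n R => M.det = 1)
    (fun A B hA hB => by rw [det_mul, hA, hB, one_mul]) det_one h

end Matrix

theorem sq_add_sq_le_goldenRatio_sq (x y : ℝ) :
    (x + y) ^ 2 + y ^ 2 ≤ φ ^ 2 * (x ^ 2 + y ^ 2) := by
  have key : φ * (φ ^ 2 * (x ^ 2 + y ^ 2) - ((x + y) ^ 2 + y ^ 2)) = (φ * x - y) ^ 2 := by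
    linear_combination (φ * x ^ 2 + (φ + 1) * y ^ 2) * goldenRatio_sq
  exact sub_nonneg.1 <| nonneg_of_mul_nonneg_right (key ▸ sq_nonneg _) goldenRatio_pos

theorem normBoundedBy_Lmat : (Lmat.map (Int.cast : ℤ → ℝ)).NormBoundedBy φ := fun v => by
  simpa [Lmat, dotProduct, Fin.sum_univ_two, mulVec, ← sq] using
    sq_add_sq_le_goldenRatio_sq (v 0) (v 1)

theorem normBoundedBy_Rmat : (Rmat.map (Int.cast : ℤ → ℝ)).NormBoundedBy φ := fun v => by
  simpa [Rmat, dotProduct, Fin.sum_univ_two, mulVec, ← sq, add_comm] using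
    sq_add_sq_le_goldenRatio_sq (v 1) (v 0)

theorem trace_le_golden_pow_general (l : List (Matrix (Fin 2) (Fin 2) ℤ))
    (hl : ∀ M ∈ l, M = Lmat ∨ M = Rmat) :
    ((l.prod.trace : ℤ) : ℝ) ≤ ((1 + Real.sqrt 5) / 2) ^ l.length + 1 := by
  set W := l.prod.map (Int.cast : ℤ → ℝ)
  have hbound : W.NormBoundedBy (φ ^ l.length) := by
    have hW : W = (l.map (Int.castRingHom ℝ).mapMatrix).prod :=
      map_list_prod (Int.castRingHom ℝ).mapMatrix l
    rw [hW, ← List.length_map (Int.castRingHom ℝ).mapMatrix]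
    refine NormBoundedBy.list_prod fun _ hN => ?_
    obtain ⟨M, hM, rfl⟩ := List.mem_map.1 hN
    rcases hl M hM with rfl | rfl
    exacts [normBoundedBy_Lmat, normBoundedBy_Rmat]
  have hdet : W.det = 1 := by
    rw [← Int.cast_det, det_list_prod_eq_one, Int.cast_one]
    intro M hM
    rcases hl M hM with rfl | rfl <;> simp [Lmat, Rmat, det_fin_two_of]
  have hpow : 1 ≤ φ ^ l.length := one_le_pow₀ one_lt_goldenRatio.le
  calc ((l.prod.trace : ℤ) : ℝ) = W.trace := AddMonoidHom.map_trace (Int.castAddHom ℝ) _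
    _ ≤ φ ^ l.length + (φ ^ l.length)⁻¹ :=
      trace_le_add_inv_of_normBoundedBy hbound (by positivity) hdet
    _ ≤ φ ^ l.length + 1 := by gcongr; exact inv_le_one_of_one_le₀ hpow

theorem trace_le_golden_pow (l : List (Matrix (Fin 2) (Fin 2) ℤ))
    (hl : ∀ M ∈ l, M = Lmat ∨ M = Rmat) (hne : l ≠ []) :
    ((l.prod.trace : ℤ) : ℝ) ≤ ((1 + Real.sqrt 5) / 2) ^ l.length + 1 :=
  trace_le_golden_pow_general l hl
end

section
/- Let w be a product of n ≥ 1 matrices from {L, R} such that w contains at least one L and at least one R factor (i.e., w is not a power of L nor a power of R). Then tr(w) ≥ n + 1. -/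
open Matrix

/-!
Two adjacent letters of the word differ, so a cyclic rotation (which preserves the trace) writes
it as `X * Y * W` with `{X, Y} = {L, R}` and `W` a word of length `n - 2`. Every word dominates the
identity entrywise, so multiplying on the left by `L` or `R` raises the sum of the entries by at
least one; hence the entries of `W` sum to at least `n`, and `tr (X * Y * W)` exceeds that sum.
-/

theorem List.exists_eq_append_cons_cons_ne {α : Type*} {l : List α} {x y : α}
    (hx : x ∈ l) (hy : y ∈ l) (hxy : x ≠ y) :
    ∃ a b l₁ l₂, a ≠ b ∧ l = l₁ ++ a :: b :: l₂ := by
  by_contra! h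
  have hchain : l.IsChain (· = ·) :=
    List.isChain_iff_forall_rel_of_append_cons_cons.2 fun a b l₁ l₂ hl =>
      not_not.1 (h a b l₁ l₂ · hl)
  cases l with
  | nil => simp at hx
  | cons a t =>
    rw [List.isChain_eq_iff_eq_replicate] at hchain
    have hrep := hchain a rfl
    rw [hrep, List.mem_replicate] at hx hy
    exact hxy (hx.2.trans hy.2.symm)

namespace Matrix

variable {n R : Type*} [Fintype n] [DecidableEq n] [Semiring R] [PartialOrder R] [IsOrderedRing R]

theorem apply_le_mul_apply {A B : Matrix n n R} (hA : ∀ i j, 0 ≤ A i j)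
    (hB : ∀ i j, (1 : Matrix n n R) i j ≤ B i j) (i j : n) : A i j ≤ (A * B) i j :=
  calc A i j = A i j * 1 := (mul_one _).symm
    _ ≤ A i j * B j j := mul_le_mul_of_nonneg_left (by simpa using hB j j) (hA i j)
    _ ≤ ∑ k, A i k * B k j :=
      Finset.single_le_sum (f := fun k => A i k * B k j)
        (fun k _ => mul_nonneg (hA i k) ((zero_le_one_elem k j).trans (hB k j)))
        (Finset.mem_univ j)
    _ = (A * B) i j := (mul_apply).symm

variable (n R) in
def oneLESubmonoid : Submonoid (Matrix n n R) where
  carrier := {M | ∀ i j, (1 : Matrix n n R) i j ≤ M i j}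
  one_mem' _ _ := le_rfl
  mul_mem' hA hB i j :=
    (hA i j).trans (apply_le_mul_apply (fun k l => (zero_le_one_elem k l).trans (hA k l)) hB i j)

theorem mem_oneLESubmonoid {M : Matrix n n R} :
    M ∈ oneLESubmonoid n R ↔ ∀ i j, (1 : Matrix n n R) i j ≤ M i j :=
  Iff.rfl

end Matrix

theorem Lmat_ne_Rmat : Lmat ≠ Rmat := by
  simp [Lmat, Rmat]

theorem prod_mem_oneLESubmonoid {l : List (Matrix (Fin 2) (Fin 2) ℤ)}
    (hl : ∀ M ∈ l, M = Lmat ∨ M = Rmat) : l.prod ∈ oneLESubmonoid (Fin 2) ℤ :=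
  Submonoid.list_prod_mem _ fun M hM => by
    rcases hl M hM with rfl | rfl <;> simp [mem_oneLESubmonoid, Lmat, Rmat, Fin.forall_fin_two]

theorem sum_apply_add_one_le_sum_mul_apply {X M : Matrix (Fin 2) (Fin 2) ℤ}
    (hX : X = Lmat ∨ X = Rmat) (hM : M ∈ oneLESubmonoid (Fin 2) ℤ) :
    ∑ i, ∑ j, M i j + 1 ≤ ∑ i, ∑ j, (X * M) i j := by
  rw [mem_oneLESubmonoid] at hM
  have := hM 0 0; have := hM 0 1; have := hM 1 0; have := hM 1 1
  rcases hX with rfl | rfl <;>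
    simp [Lmat, Rmat, Matrix.mul_apply, Fin.sum_univ_two] at * <;> linarith

theorem length_add_two_le_sum_prod_apply {l : List (Matrix (Fin 2) (Fin 2) ℤ)}
    (hl : ∀ M ∈ l, M = Lmat ∨ M = Rmat) : (l.length : ℤ) + 2 ≤ ∑ i, ∑ j, l.prod i j := by
  induction l with
  | nil => simp [Fin.sum_univ_two]
  | cons X t ih =>
    have ht : ∀ M ∈ t, M = Lmat ∨ M = Rmat := fun M hM => hl M (List.mem_cons_of_mem X hM)
    have hstep := sum_apply_add_one_le_sum_mul_apply (hl X List.mem_cons_self)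
      (prod_mem_oneLESubmonoid ht)
    push_cast [List.length_cons, List.prod_cons]
    linarith [ih ht]

theorem sum_apply_add_one_le_trace_mul_mul {X Y M : Matrix (Fin 2) (Fin 2) ℤ}
    (hX : X = Lmat ∨ X = Rmat) (hY : Y = Lmat ∨ Y = Rmat) (hXY : X ≠ Y)
    (hM : M ∈ oneLESubmonoid (Fin 2) ℤ) : ∑ i, ∑ j, M i j + 1 ≤ (X * Y * M).trace := by
  rw [mem_oneLESubmonoid] at hM
  have := hM 0 0; have := hM 1 1
  rcases hX with rfl | rfl <;> rcases hY with rfl | rfl <;>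
    simp [Lmat, Rmat, Matrix.trace_fin_two, vecMul, dotProduct, Fin.sum_univ_two] at * <;> linarith

theorem trace_ge_length_succ (l : List (Matrix (Fin 2) (Fin 2) ℤ))
    (hl : ∀ M ∈ l, M = Lmat ∨ M = Rmat) (hL : Lmat ∈ l) (hR : Rmat ∈ l) :
    l.prod.trace ≥ (l.length : ℤ) + 1 := by
  obtain ⟨X, Y, u, v, hXY, rfl⟩ := List.exists_eq_append_cons_cons_ne hL hR Lmat_ne_Rmat
  have hw : ∀ M ∈ v ++ u, M = Lmat ∨ M = Rmat := fun M hM =>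
    hl M (by simp only [List.mem_append, List.mem_cons] at hM ⊢; tauto)
  calc ((u ++ X :: Y :: v).length : ℤ) + 1 = ((v ++ u).length : ℤ) + 2 + 1 := by
        simp only [List.length_append, List.length_cons]; push_cast; ring
    _ ≤ ∑ i, ∑ j, (v ++ u).prod i j + 1 := by gcongr; exact length_add_two_le_sum_prod_apply hw
    _ ≤ (X * Y * (v ++ u).prod).trace :=
        sum_apply_add_one_le_trace_mul_mul (hl X (by simp)) (hl Y (by simp)) hXY
          (prod_mem_oneLESubmonoid hw)
    _ = (u ++ X :: Y :: v).prod.trace := by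
        simp only [List.prod_append, List.prod_cons]
        rw [trace_mul_comm u.prod]
        simp only [mul_assoc]
end

section
/- Let w' be a word in {L, R} obtained from a word w by inserting additional letters from {L, R} at arbitrary positions. Then tr(w') ≥ tr(w). -/
open Matrix

/-!
`L` and `R` dominate the identity entrywise, hence are nonnegative. For a nonnegative `A` and
such an `M` we get `A ≤ M * A` entrywise, and left multiplication by a nonnegative matrix is
entrywise monotone; so inserting letters into a word can only increase every entry of its
product, in particular the diagonal ones.
-/

namespace Matrix

section EntrywiseOrder

variable {l m n R : Type*} [Semiring R] [PartialOrder R] [IsOrderedRing R]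

theorem mul_apply_le_mul_apply_of_nonneg_left [Fintype m] {M : Matrix l m R}
    {A B : Matrix m n R} (hM : ∀ i j, 0 ≤ M i j) (hAB : ∀ i j, A i j ≤ B i j) (i : l) (j : n) :
    (M * A) i j ≤ (M * B) i j :=
  Finset.sum_le_sum fun k _ => mul_le_mul_of_nonneg_left (hAB k j) (hM i k)

theorem mul_apply_le_mul_apply_of_nonneg_right [Fintype m] {M N : Matrix l m R}
    {A : Matrix m n R} (hMN : ∀ i j, M i j ≤ N i j) (hA : ∀ i j, 0 ≤ A i j) (i : l) (j : n) :
    (M * A) i j ≤ (N * A) i j :=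
  Finset.sum_le_sum fun k _ => mul_le_mul_of_nonneg_right (hMN i k) (hA k j)

variable [DecidableEq n]

theorem one_apply_nonneg (i j : n) : 0 ≤ (1 : Matrix n n R) i j := by
  rw [one_apply]
  split_ifs <;> simp

variable [Fintype n]

theorem apply_le_mul_apply_of_one_le {M A : Matrix n n R}
    (hM : ∀ i j, (1 : Matrix n n R) i j ≤ M i j) (hA : ∀ i j, 0 ≤ A i j) (i j : n) :
    A i j ≤ (M * A) i j := by
  simpa only [one_mul] using mul_apply_le_mul_apply_of_nonneg_right hM hA i j

theorem list_prod_apply_nonneg {L : List (Matrix n n R)} (hL : ∀ M ∈ L, ∀ i j, 0 ≤ M i j)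
    (i j : n) : 0 ≤ L.prod i j := by
  induction L generalizing i j with
  | nil => exact one_apply_nonneg i j
  | cons M L ih =>
    rw [List.forall_mem_cons] at hL
    rw [List.prod_cons]
    exact Finset.sum_nonneg fun k _ => mul_nonneg (hL.1 i k) (ih hL.2 k j)

theorem _root_.List.Sublist.prod_apply_le {L L' : List (Matrix n n R)} (h : L.Sublist L')
    (hL' : ∀ M ∈ L', ∀ i j, (1 : Matrix n n R) i j ≤ M i j) (i j : n) :
    L.prod i j ≤ L'.prod i j := by
  induction h generalizing i j with
  | slnil => rfl
  | @cons L L' M _ ih =>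
    rw [List.forall_mem_cons] at hL'
    have hprod := list_prod_apply_nonneg
      (fun N hN i j => (one_apply_nonneg i j).trans (hL'.2 N hN i j))
    rw [List.prod_cons]
    exact (ih hL'.2 i j).trans (apply_le_mul_apply_of_one_le hL'.1 hprod i j)
  | @cons_cons L L' M _ ih =>
    rw [List.forall_mem_cons] at hL'
    rw [List.prod_cons, List.prod_cons]
    exact mul_apply_le_mul_apply_of_nonneg_left
      (fun i j => (one_apply_nonneg i j).trans (hL'.1 i j)) (ih hL'.2) i j

end EntrywiseOrder

theorem trace_le_trace_of_diag_le {n R : Type*} [Fintype n] [AddCommMonoid R] [PartialOrder R]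
    [IsOrderedAddMonoid R] {A B : Matrix n n R} (h : ∀ i, A i i ≤ B i i) : A.trace ≤ B.trace :=
  Finset.sum_le_sum fun i _ => h i

end Matrix

theorem one_apply_le_Lmat_apply (i j : Fin 2) :
    (1 : Matrix (Fin 2) (Fin 2) ℤ) i j ≤ Lmat i j := by
  fin_cases i <;> fin_cases j <;> simp [Lmat]

theorem one_apply_le_Rmat_apply (i j : Fin 2) :
    (1 : Matrix (Fin 2) (Fin 2) ℤ) i j ≤ Rmat i j := by
  fin_cases i <;> fin_cases j <;> simp [Rmat]

theorem trace_mono_insertion (l l' : List (Matrix (Fin 2) (Fin 2) ℤ))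
    (hl' : ∀ M ∈ l', M = Lmat ∨ M = Rmat) (hsub : l.Sublist l') :
    l'.prod.trace ≥ l.prod.trace := by
  have hone : ∀ M ∈ l', ∀ i j, (1 : Matrix (Fin 2) (Fin 2) ℤ) i j ≤ M i j := by
    intro M hM
    rcases hl' M hM with rfl | rfl
    exacts [one_apply_le_Lmat_apply, one_apply_le_Rmat_apply]
  exact trace_le_trace_of_diag_le fun i => hsub.prod_apply_le hone i i
end

section
/- Define N(m) = ∑_{k=3}^{m} n(k), where n(k) is the number of 2x2 integer matrices with determinant 1, nonnegative entries, and trace k. Then N(m) = O(m² log m), i.e., there exists a constant C such that N(m) ≤ C·m²·log m for all m ≥ 3. -/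
/-! A matrix `!![a, b; c, d]` of trace `k ≤ m` counted here has `b * c = a * d - 1`, so it
is determined by `a`, `d`, `e = min b c` and by which of `b`, `c` is the smaller one. Moreover
`e² ≤ b * c < m²` and `a * d ≡ 1 (mod e)`; for fixed `a` and `e` this congruence confines `d`
to a single residue class mod `e` (`a` is a unit mod `e`), which has at most `m / e + 1`
elements below `m`. Summing over `a, e < m` bounds the count by
`2m ∑_{e<m} (m / e + 1) ≤ 2m² (log m + 2)`, the logarithm coming from the harmonic sum. -/

open Finset Matrix

namespace Nat

theorem card_filter_range_modEq_le (m e v : ℕ) :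
    #{d ∈ range m | d ≡ v [MOD e]} ≤ m / e + 1 := by
  rcases e.eq_zero_or_pos with rfl | he
  · rw [Nat.div_zero, zero_add, card_le_one]
    intro d hd d' hd'
    simp only [mem_filter, modEq_zero_iff] at hd hd'
    rw [hd.2, hd'.2]
  · rw [← count_eq_card_filter_range, count_modEq_card _ he]
    split_ifs <;> omega

theorem ModEq.of_mul_left_modEq_one {a d d' e : ℕ} (h : a * d ≡ 1 [MOD e])
    (h' : a * d' ≡ 1 [MOD e]) : d ≡ d' [MOD e] :=
  ModEq.cancel_left_of_coprime (coprime_of_mul_modEq_one d h).symm (h.trans h'.symm)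

theorem card_filter_range_mul_modEq_one_le (m a e : ℕ) :
    #{d ∈ range m | a * d ≡ 1 [MOD e]} ≤ m / e + 1 := by
  obtain h | ⟨d₀, hd₀⟩ := eq_empty_or_nonempty {d ∈ range m | a * d ≡ 1 [MOD e]}
  · simp [h]
  refine le_trans (card_le_card fun d hd => ?_) (card_filter_range_modEq_le m e d₀)
  rw [mem_filter] at hd hd₀ ⊢
  exact ⟨hd.1, hd.2.of_mul_left_modEq_one hd₀.2⟩

theorem sum_range_div_add_one_le (m : ℕ) :
    ((∑ e ∈ range m, (m / e + 1) : ℕ) : ℝ) ≤ m * (Real.log m + 2) := by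
  have hinv : ∑ e ∈ range m, (e : ℝ)⁻¹ ≤ 1 + Real.log m := calc
    ∑ e ∈ range m, (e : ℝ)⁻¹ ≤ ∑ e ∈ range (m + 1), (e : ℝ)⁻¹ :=
      sum_le_sum_of_subset_of_nonneg (range_subset_range.2 (le_succ m)) fun _ _ _ => by positivity
    _ = harmonic m := by simp [harmonic, sum_range_succ']
    _ ≤ 1 + Real.log m := harmonic_le_one_add_log m
  calc ((∑ e ∈ range m, (m / e + 1) : ℕ) : ℝ)
      ≤ ∑ e ∈ range m, ((m : ℝ) * (e : ℝ)⁻¹ + 1) := by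
        push_cast
        gcongr with e
        exact cast_div_le.trans_eq (div_eq_mul_inv _ _)
    _ = m * ∑ e ∈ range m, (e : ℝ)⁻¹ + m := by simp [sum_add_distrib, mul_sum]
    _ ≤ m * (Real.log m + 2) := by nlinarith [hinv, (m.cast_nonneg : (0 : ℝ) ≤ m)]

theorem min_pos_of_mul_eq_mul_add_one {a b c d : ℕ} (h : a * d = b * c + 1) (had : 3 ≤ a + d) :
    0 < min b c := by
  rw [Nat.pos_iff_ne_zero, ne_eq, Nat.min_eq_zero_iff]
  rintro (rfl | rfl) <;>
  · obtain ⟨rfl, rfl⟩ : a = 1 ∧ d = 1 := by simpa using h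
    omega

theorem eq_and_eq_of_min_eq_of_mul_eq {b c b' c' : ℕ} (hpos : 0 < min b c)
    (hmul : b * c = b' * c') (hmin : min b c = min b' c') (hle : b ≤ c ↔ b' ≤ c') :
    b = b' ∧ c = c' := by
  by_cases h : b ≤ c
  · have hb : b = b' := by rwa [min_eq_left h, min_eq_left (hle.1 h)] at hmin
    subst hb
    exact ⟨rfl, Nat.eq_of_mul_eq_mul_left (lt_min_iff.1 hpos).1 hmul⟩
  · have hc : c = c' := by
      rwa [min_eq_right (not_le.1 h).le, min_eq_right (not_le.1 (h ∘ hle.2)).le] at hmin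
    subst hc
    exact ⟨Nat.eq_of_mul_eq_mul_right (lt_min_iff.1 hpos).2 hmul, rfl⟩

end Nat

def mulModEqOneTriples (m : ℕ) : Finset (ℕ × ℕ × ℕ) :=
  {x ∈ range m ×ˢ range m ×ˢ range m | x.1 * x.2.2 ≡ 1 [MOD x.2.1]}

theorem card_mulModEqOneTriples_le (m : ℕ) :
    #(mulModEqOneTriples m) ≤ m * ∑ e ∈ range m, (m / e + 1) := by
  rw [mulModEqOneTriples, card_filter, sum_product]
  calc _ ≤ ∑ _a ∈ range m, ∑ e ∈ range m, (m / e + 1) := by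
        refine sum_le_sum fun a _ => ?_
        rw [sum_product]
        refine sum_le_sum fun e _ => ?_
        rw [← card_filter]
        exact Nat.card_filter_range_mul_modEq_one_le m a e
    _ = _ := by rw [sum_const, card_range, smul_eq_mul]

theorem mk_min_mem_mulModEqOneTriples {a b c d m : ℕ} (h : a * d = b * c + 1) (hm : a + d ≤ m) :
    (a, min b c, d) ∈ mulModEqOneTriples m := by
  have ha : 0 < a := Nat.pos_of_mul_pos_right (by omega : 0 < a * d)
  have hd : 0 < d := Nat.pos_of_mul_pos_left (by omega : 0 < a * d)
  have hmin : min b c * min b c < m * m := calc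
    min b c * min b c ≤ b * c := Nat.mul_le_mul (min_le_left _ _) (min_le_right _ _)
    _ < a * d := by omega
    _ ≤ m * m := Nat.mul_le_mul (by omega) (by omega)
  simp only [mulModEqOneTriples, mem_filter, mem_product, mem_range]
  refine ⟨⟨by omega, Nat.mul_self_lt_mul_self_iff.1 hmin, by omega⟩, ?_⟩
  rw [h]
  refine (Nat.modEq_zero_iff_dvd.2 ?_).add_right 1
  rcases min_choice b c with hmin | hmin <;> rw [hmin]
  exacts [dvd_mul_right b c, dvd_mul_left c b]

def nonnegSL2Trace (k : ℕ) : Set (Matrix (Fin 2) (Fin 2) ℤ) :=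
  {M | M.det = 1 ∧ (∀ i j, 0 ≤ M i j) ∧ M.trace = (k : ℤ)}

theorem Matrix.exists_eq_natCast_of_nonneg {M : Matrix (Fin 2) (Fin 2) ℤ}
    (h : ∀ i j, 0 ≤ M i j) :
    ∃ a b c d : ℕ, M = !![(a : ℤ), b; c, d] :=
  ⟨(M 0 0).toNat, (M 0 1).toNat, (M 1 0).toNat, (M 1 1).toNat, by
    ext i j; fin_cases i <;> fin_cases j <;> simp [h]⟩

theorem natCast_mem_nonnegSL2Trace_iff {a b c d k : ℕ} :
    !![(a : ℤ), b; c, d] ∈ nonnegSL2Trace k ↔ a * d = b * c + 1 ∧ a + d = k := by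
  simp only [nonnegSL2Trace, Set.mem_ofPred_eq, det_fin_two_of, trace_fin_two_of]
  constructor
  · rintro ⟨hdet, -, htr⟩
    exact ⟨by omega, by omega⟩
  · rintro ⟨hdet, rfl⟩
    refine ⟨by omega, fun i j => ?_, by push_cast; ring⟩
    fin_cases i <;> fin_cases j <;> simp

def diagMinCode (M : Matrix (Fin 2) (Fin 2) ℤ) : (ℕ × ℕ × ℕ) × Bool :=
  (((M 0 0).toNat, (min (M 0 1) (M 1 0)).toNat, (M 1 1).toNat), decide (M 0 1 ≤ M 1 0))

theorem diagMinCode_natCast (a b c d : ℕ) :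
    diagMinCode !![(a : ℤ), b; c, d] = ((a, min b c, d), decide (b ≤ c)) := by
  simp [diagMinCode, ← Nat.cast_min]

theorem ncard_nonnegSL2Trace_le {m k : ℕ} (hk : 3 ≤ k) (hkm : k ≤ m) :
    (nonnegSL2Trace k).ncard ≤
      #{p ∈ mulModEqOneTriples m ×ˢ (univ : Finset Bool) | p.1.1 + p.1.2.2 = k} := by
  rw [← Set.ncard_coe_finset]
  refine Set.ncard_le_ncard_of_injOn diagMinCode ?_ ?_ (finite_toSet _)
  · intro M hM
    obtain ⟨a, b, c, d, rfl⟩ := exists_eq_natCast_of_nonneg hM.2.1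
    obtain ⟨hdet, rfl⟩ := natCast_mem_nonnegSL2Trace_iff.1 hM
    simp [diagMinCode_natCast, mk_min_mem_mulModEqOneTriples hdet hkm]
  · intro M hM M' hM' hcode
    obtain ⟨a, b, c, d, rfl⟩ := exists_eq_natCast_of_nonneg hM.2.1
    obtain ⟨a', b', c', d', rfl⟩ := exists_eq_natCast_of_nonneg hM'.2.1
    obtain ⟨hdet, rfl⟩ := natCast_mem_nonnegSL2Trace_iff.1 hM
    obtain ⟨hdet', -⟩ := natCast_mem_nonnegSL2Trace_iff.1 hM'
    simp only [diagMinCode_natCast, Prod.mk.injEq, decide_eq_decide] at hcode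
    obtain ⟨⟨rfl, hmin, rfl⟩, hle⟩ := hcode
    obtain ⟨rfl, rfl⟩ := Nat.eq_and_eq_of_min_eq_of_mul_eq
      (Nat.min_pos_of_mul_eq_mul_add_one hdet hk) (by omega) hmin hle
    rfl

theorem N_growth :
    ∃ C : ℝ, ∀ m : ℕ, 3 ≤ m →
      ((∑ k ∈ Finset.Icc 3 m,
          {M : Matrix (Fin 2) (Fin 2) ℤ |
            M.det = 1 ∧ (∀ i j, 0 ≤ M i j) ∧ M.trace = (k : ℤ)}.ncard : ℝ)) ≤
        C * m ^ 2 * Real.log m := by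
  refine ⟨6, fun m hm => ?_⟩
  have hcount : ∑ k ∈ Icc 3 m, (nonnegSL2Trace k).ncard ≤
      2 * (m * ∑ e ∈ range m, (m / e + 1)) := calc
    _ ≤ ∑ k ∈ Icc 3 m,
          #{p ∈ mulModEqOneTriples m ×ˢ (univ : Finset Bool) | p.1.1 + p.1.2.2 = k} :=
      sum_le_sum fun k hk => ncard_nonnegSL2Trace_le (mem_Icc.1 hk).1 (mem_Icc.1 hk).2
    _ ≤ #(mulModEqOneTriples m ×ˢ (univ : Finset Bool)) := by
      rw [sum_card_fiberwise_eq_card_filter]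
      exact card_filter_le _ _
    _ ≤ 2 * (m * ∑ e ∈ range m, (m / e + 1)) := by
      rw [card_product, card_univ, Fintype.card_bool, mul_comm]
      exact Nat.mul_le_mul_left 2 (card_mulModEqOneTriples_le m)
  have hlog : 1 ≤ Real.log m := by
    rw [Real.le_log_iff_exp_le (by positivity)]
    have : (3 : ℝ) ≤ m := by exact_mod_cast hm
    linarith [Real.exp_one_lt_d9]
  calc _ ≤ 2 * (m * ((∑ e ∈ range m, (m / e + 1) : ℕ) : ℝ)) := by exact_mod_cast hcount
    _ ≤ 2 * (m * (m * (Real.log m + 2))) := by gcongr; exact Nat.sum_range_div_add_one_le m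
    _ ≤ 6 * m ^ 2 * Real.log m := by nlinarith
end
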